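/- Coercivity of the Maupertuis functional: with the setting above (h < 0, |q| = r < r_LJ), if (u_n) ⊂ H_coll^q satisfies ‖u_n‖_{H¹} → ∞, then M_h(u_n) → ∞. -/
import Mathlib


open Set MeasureTheory intervalIntegral Filter

noncomputable def Vpot (α : ℝ) (U : EuclideanSpace ℝ (Fin 2) → ℝ)
    (x : EuclideanSpace ℝ (Fin 2)) : ℝ :=
  ‖x‖ ^ (-α) * U (‖x‖⁻¹ • x)

/-- The Maupertuis functional, `M_h(u) = (1/2)∫₀¹|u̇|² · ∫₀¹(h+V(u))`. -/
noncomputable def Maupertuis (α h : ℝ) (U : EuclideanSpace ℝ (Fin 2) → ℝ)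
    (u : ℝ → EuclideanSpace ℝ (Fin 2)) : ℝ :=
  ((1/2) * ∫ s in (0:ℝ)..1, ‖deriv u s‖ ^ 2) *
    (∫ s in (0:ℝ)..1, (h + Vpot α U (u s)))

/-- Coercivity of the Maupertuis functional on `H_coll^q`: if the `H¹` norms of
a sequence of collision paths blow up, so do their Maupertuis values. -/
theorem maupertuis_coercive
    (α h Umin r : ℝ) (hα : α ∈ Set.Ioo (0:ℝ) 2) (hh : h < 0)
    (U : EuclideanSpace ℝ (Fin 2) → ℝ) (hUcont : Continuous U)
    (hUmin : ∀ s : EuclideanSpace ℝ (Fin 2), ‖s‖ = 1 → Umin ≤ U s)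
    (hUminpos : 0 < Umin)
    (hr : 0 < r) (hrLJ : r < ((2 - α) * Umin / (-2 * h)) ^ (1/α))
    (q : EuclideanSpace ℝ (Fin 2)) (hq : ‖q‖ = r)
    (u : ℕ → ℝ → EuclideanSpace ℝ (Fin 2))
    (hu0 : ∀ n, u n 0 = q) (hu1 : ∀ n, u n 1 = 0)
    (hcont : ∀ n, ContinuousOn (u n) (Icc 0 1))
    (hderiv : ∀ n, ∀ s ∈ Ioo (0:ℝ) 1, DifferentiableAt ℝ (u n) s)
    (hbound : ∀ n, ∀ s ∈ Icc (0:ℝ) 1, ‖u n s‖ ≤ r)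
    (hae : ∀ n, ∀ᵐ s, s ∈ Icc (0:ℝ) 1 → u n s ≠ 0)
    (hL2 : ∀ n, IntervalIntegrable (fun s => ‖deriv (u n) s‖ ^ 2) volume 0 1)
    (hVint : ∀ n, IntervalIntegrable (fun s => h + Vpot α U (u n s)) volume 0 1)
    (hblow : Tendsto (fun n =>
        (∫ s in (0:ℝ)..1, ‖u n s‖ ^ 2) +
        (∫ s in (0:ℝ)..1, ‖deriv (u n) s‖ ^ 2)) atTop atTop) :
    Tendsto (fun n => Maupertuis α h U (u n)) atTop atTop := by
  obtain ⟨hα0, hα2⟩ := hα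
  have h2α : 0 < 2 - α := by linarith
  set c : ℝ := α * (-h) / (2 - α) with hc_def
  have hc : 0 < c := div_pos (mul_pos hα0 (by linarith)) h2α
  -- r ^ α < K
  have hKpos : 0 < (2 - α) * Umin / (-2 * h) :=
    div_pos (mul_pos h2α hUminpos) (by linarith)
  have hrα : r ^ α < (2 - α) * Umin / (-2 * h) := by
    have h1 : r ^ α < (((2 - α) * Umin / (-2 * h)) ^ (1/α)) ^ α :=
      Real.rpow_lt_rpow hr.le hrLJ hα0
    rwa [← Real.rpow_mul hKpos.le, one_div, inv_mul_cancel₀ hα0.ne',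
      Real.rpow_one] at h1
  have hrapos : 0 < r ^ α := Real.rpow_pos_of_pos hr α
  -- pointwise lower bound on the potential term
  have hpt : ∀ x : EuclideanSpace ℝ (Fin 2), x ≠ 0 → ‖x‖ ≤ r →
      c ≤ h + Vpot α U x := by
    intro x hx hxr
    have hxpos : 0 < ‖x‖ := norm_pos_iff.mpr hx
    have hunit : ‖(‖x‖⁻¹ • x)‖ = 1 := by
      rw [norm_smul, norm_inv, norm_norm, inv_mul_cancel₀ hxpos.ne']
    have hU : Umin ≤ U (‖x‖⁻¹ • x) := hUmin _ hunit
    have hxα : ‖x‖ ^ α ≤ r ^ α := Real.rpow_le_rpow hxpos.le hxr hα0.le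
    have hxαpos : 0 < ‖x‖ ^ α := Real.rpow_pos_of_pos hxpos α
    have hinv : (r ^ α)⁻¹ ≤ ‖x‖ ^ (-α) := by
      rw [Real.rpow_neg hxpos.le]
      exact inv_anti₀ hxαpos hxα
    have hVlb : (r ^ α)⁻¹ * Umin ≤ Vpot α U x := by
      unfold Vpot
      have h0 : (0:ℝ) ≤ ‖x‖ ^ (-α) := (Real.rpow_pos_of_pos hxpos _).le
      calc (r ^ α)⁻¹ * Umin ≤ ‖x‖ ^ (-α) * Umin :=
            mul_le_mul_of_nonneg_right hinv hUminpos.le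
        _ ≤ ‖x‖ ^ (-α) * U (‖x‖⁻¹ • x) := mul_le_mul_of_nonneg_left hU h0
    have hkey : c - h ≤ (r ^ α)⁻¹ * Umin := by
      have hcross : r ^ α * (-2 * h) < (2 - α) * Umin :=
        (lt_div_iff₀ (by linarith : (0:ℝ) < -2 * h)).mp hrα
      have h1 : c - h = (-2 * h) / (2 - α) := by
        rw [hc_def]; field_simp; ring
      rw [h1, inv_mul_eq_div, div_le_div_iff₀ h2α hrapos]
      nlinarith
    linarith
  -- second factor bounded below by c
  have hB : ∀ n, c ≤ ∫ s in (0:ℝ)..1, (h + Vpot α U (u n s)) := by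
    intro n
    have hconst : (∫ _ in (0:ℝ)..1, c) = c := by
      rw [intervalIntegral.integral_const, sub_zero, one_smul]
    rw [← hconst]
    apply intervalIntegral.integral_mono_ae_restrict (by norm_num)
      intervalIntegrable_const (hVint n)
    have h1 : ∀ᵐ s ∂(volume.restrict (Icc (0:ℝ) 1)),
        s ∈ Icc (0:ℝ) 1 → u n s ≠ 0 := ae_restrict_of_ae (hae n)
    have h2 : ∀ᵐ s ∂(volume.restrict (Icc (0:ℝ) 1)), s ∈ Icc (0:ℝ) 1 :=
      ae_restrict_mem measurableSet_Icc
    filter_upwards [h1, h2] with s hs1 hs2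
    exact hpt _ (hs1 hs2) (hbound n s hs2)
  -- bounded L² norm of u n
  have hq2 : ∀ n, (∫ s in (0:ℝ)..1, ‖u n s‖ ^ 2) ≤ r ^ 2 := by
    intro n
    have hint : IntervalIntegrable (fun s => ‖u n s‖ ^ 2) volume 0 1 := by
      apply ContinuousOn.intervalIntegrable
      rw [uIcc_of_le (by norm_num : (0:ℝ) ≤ 1)]
      exact ((hcont n).norm.pow 2)
    have := intervalIntegral.integral_mono_on (by norm_num : (0:ℝ) ≤ 1) hint
      intervalIntegrable_const (g := fun _ => r ^ 2)
      (fun s hs => pow_le_pow_left₀ (norm_nonneg _) (hbound n s hs) 2)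
    simpa using this
  -- kinetic integrals blow up
  set A : ℕ → ℝ := fun n => ∫ s in (0:ℝ)..1, ‖deriv (u n) s‖ ^ 2 with hA_def
  have hAnn : ∀ n, 0 ≤ A n := fun n =>
    intervalIntegral.integral_nonneg (by norm_num) (fun s _ => by positivity)
  have hAtend : Tendsto A atTop atTop := by
    have h1 : Tendsto (fun n =>
        ((∫ s in (0:ℝ)..1, ‖u n s‖ ^ 2) + A n) + (-(r ^ 2))) atTop atTop :=
      tendsto_atTop_add_const_right _ _ hblow
    apply tendsto_atTop_mono _ h1
    intro n
    have := hq2 n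
    simp only [hA_def]
    linarith
  -- conclude
  have hfinal : ∀ n, c / 2 * A n ≤ Maupertuis α h U (u n) := by
    intro n
    have hBn := hB n
    have hAn := hAnn n
    unfold Maupertuis
    have : (1/2 * A n) * c ≤ (1/2 * A n) * (∫ s in (0:ℝ)..1, (h + Vpot α U (u n s))) :=
      mul_le_mul_of_nonneg_left hBn (by linarith)
    calc c / 2 * A n = (1/2 * A n) * c := by ring
      _ ≤ _ := this
  exact tendsto_atTop_mono hfinal (hAtend.const_mul_atTop (by linarith : 0 < c / 2))
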